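/- Let 0 < δ < 1 and for i ≥ 0 let J^(i) = {j ∈ J : δ^{−i} ≤ b_j < δ^{−(i+1)}}. Suppose for each k ≥ 0 a set R_k ⊆ J^(2k) is given such that for every edge e_t, the total demand of the jobs of R_k using e_t is at most min(c_t, 2δ^{−(2k+1)}). Then the union R = ∪_k R_k is a feasible round under the augmented capacities ((1+γ)c_t), where γ = 2δ/(1−δ²); i.e., for every edge e_t the total demand of jobs of R using e_t is at most (1+γ)c_t. The analogous statement holds for sets R_k ⊆ J^(2k+1) with per-edge bounds min(c_t, 2δ^{−(2k+2)}). -/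

import Mathlib

open scoped Classical

namespace PathUFP

variable {ι : Type*}

/-- Job `i` uses the edge `e_{k+1}` (for `k : Fin m`, edges being 1-indexed
`e_1, …, e_m`) iff `s_i < k + 1 ≤ t_i`, i.e. iff `s_i ≤ k < t_i`. -/
def uses (s t : ι → ℕ) {m : ℕ} (i : ι) (k : Fin m) : Prop :=
  s i ≤ (k : ℕ) ∧ (k : ℕ) < t i

/-- The bottleneck capacity `b_i = min {c_k : i uses e_k}` of job `i` lies in the
interval `[δ^{-lvl}, δ^{-(lvl+1)})`, i.e. `i ∈ J^(lvl)`: every edge used by `i` has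
capacity at least `δ^{-lvl}`, and some edge used by `i` has capacity less than
`δ^{-(lvl+1)}`. -/
def LevelMem (s t : ι → ℕ) {m : ℕ} (c : Fin m → ℝ) (δ : ℝ) (lvl : ℕ) (i : ι) : Prop :=
  (∀ k : Fin m, uses s t i k → δ ^ (-(lvl : ℤ)) ≤ c k) ∧
  (∃ k : Fin m, uses s t i k ∧ c k < δ ^ (-((lvl : ℤ) + 1)))

end PathUFP

/-!
Fix an edge `e` and write `o ∈ {0, 1}` for the parity of the levels. A job of `R_k` on `e` has
bottleneck capacity at least `δ^{-(2k+o)}`, so only levels with `δ^{-(2k+o)} ≤ c_e` load `e`.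
Let `K` be the topmost level loading `e`: its load is at most `c_e`, and every lower level `k`
contributes at most `2δ^{-(2k+o+1)}`. These lower bounds form a geometric series of ratio `δ²`
whose sum is at most `2δ^{-(2K+o)} · δ / (1 - δ²) ≤ γ c_e`.
-/

open Finset

namespace PathUFP

lemma sum_range_zpow_neg_odd_le {δ : ℝ} (hδ0 : 0 < δ) (hδ1 : δ < 1) (a : ℤ) (n : ℕ) :
    ∑ k ∈ range n, δ ^ (-(2 * (k : ℤ) + a + 1)) ≤
      δ ^ (-(2 * (n : ℤ) + a)) * δ / (1 - δ ^ 2) := by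
  have hδ2 : 0 < 1 - δ ^ 2 := by nlinarith
  induction n with
  | zero => rw [range_zero, sum_empty]; exact div_nonneg (by positivity) hδ2.le
  | succ n ih =>
    obtain ⟨x, hx⟩ : ∃ x, δ ^ (-(2 * (n : ℤ) + a + 1)) = x := ⟨_, rfl⟩
    have hprev : δ ^ (-(2 * (n : ℤ) + a)) = x * δ := by
      rw [← hx, ← zpow_add_one₀ hδ0.ne']; ring_nf
    have hnext : δ ^ (-(2 * ((n + 1 : ℕ) : ℤ) + a)) * δ = x := by
      rw [← hx, ← zpow_add_one₀ hδ0.ne']; push_cast; ring_nf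
    rw [sum_range_succ, hnext, hx]
    calc ∑ k ∈ range n, δ ^ (-(2 * (k : ℤ) + a + 1)) + x
        ≤ x * δ * δ / (1 - δ ^ 2) + x := by rw [← hprev]; gcongr
      _ = x / (1 - δ ^ 2) := by field_simp; ring

lemma exists_lt_of_zpow_neg_le {δ : ℝ} (hδ0 : 0 < δ) (hδ1 : δ < 1) (C : ℝ) :
    ∃ N : ℕ, ∀ j : ℤ, δ ^ (-j) ≤ C → j < N := by
  obtain ⟨N, hN⟩ := pow_unbounded_of_one_lt C (one_lt_inv₀ hδ0 |>.2 hδ1)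
  refine ⟨N, fun j hj => ?_⟩
  have hlt : δ ^ (-j) < δ ^ (-(N : ℤ)) :=
    calc δ ^ (-j) ≤ C := hj
      _ < δ⁻¹ ^ N := hN
      _ = δ ^ (-(N : ℤ)) := by rw [zpow_neg, zpow_natCast, inv_pow]
  have := (zpow_lt_zpow_iff_right_of_lt_one₀ hδ0 hδ1).1 hlt
  omega

lemma sum_range_le_of_top_level {δ : ℝ} (hδ0 : 0 < δ) (hδ1 : δ < 1) {C : ℝ} (hC : 0 ≤ C)
    {x : ℕ → ℝ} (a : ℤ) (hx : ∀ k, x k ≤ min C (2 * δ ^ (-(2 * (k : ℤ) + a + 1))))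
    (hsupp : ∀ k, x k ≠ 0 → δ ^ (-(2 * (k : ℤ) + a)) ≤ C) (n : ℕ) :
    ∑ k ∈ range n, x k ≤ (1 + 2 * δ / (1 - δ ^ 2)) * C := by
  have hδ2 : 0 < 1 - δ ^ 2 := by nlinarith
  induction n with
  | zero => simp only [range_zero, sum_empty]; positivity
  | succ n ih =>
    rw [sum_range_succ]
    by_cases hxn : x n = 0
    · simpa [hxn] using ih
    calc ∑ k ∈ range n, x k + x n
        ≤ 2 * ∑ k ∈ range n, δ ^ (-(2 * (k : ℤ) + a + 1)) + C := by
          rw [mul_sum]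
          exact add_le_add (sum_le_sum fun k _ => (hx k).trans (min_le_right _ _))
            ((hx n).trans (min_le_left _ _))
      _ ≤ 2 * (δ ^ (-(2 * (n : ℤ) + a)) * δ / (1 - δ ^ 2)) + C := by
          gcongr; exact sum_range_zpow_neg_odd_le hδ0 hδ1 a n
      _ ≤ 2 * (C * δ / (1 - δ ^ 2)) + C := by gcongr; exact hsupp n hxn
      _ = (1 + 2 * δ / (1 - δ ^ 2)) * C := by ring

lemma sum_ite_exists_mem_le {ι M : Type*} [Fintype ι] [AddCommMonoid M] [PartialOrder M]
    [IsOrderedAddMonoid M] (R : ℕ → Finset ι) (p : ι → Prop) (f : ι → M) (hf : ∀ i, 0 ≤ f i)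
    {n : ℕ} (hn : ∀ k, ∀ i ∈ R k, p i → k < n) :
    ∑ i, (if (∃ k, i ∈ R k) ∧ p i then f i else 0) ≤
      ∑ k ∈ range n, ∑ i ∈ R k, if p i then f i else 0 := by
  have hnonneg : ∀ i k, 0 ≤ if i ∈ R k then (if p i then f i else 0) else 0 := by
    intro i k; split_ifs <;> simp [hf]
  calc ∑ i, (if (∃ k, i ∈ R k) ∧ p i then f i else 0)
      ≤ ∑ i, ∑ k ∈ range n, if i ∈ R k then (if p i then f i else 0) else 0 := by
        refine sum_le_sum fun i _ => ?_
        by_cases h : (∃ k, i ∈ R k) ∧ p i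
        · rw [if_pos h]
          obtain ⟨⟨k, hk⟩, hp⟩ := h
          calc f i = if i ∈ R k then (if p i then f i else 0) else 0 := by simp [hk, hp]
            _ ≤ _ := single_le_sum (fun k _ => hnonneg i k) (mem_range.2 (hn k i hk hp))
        · rw [if_neg h]
          exact sum_nonneg fun k _ => hnonneg i k
    _ = ∑ k ∈ range n, ∑ i ∈ R k, if p i then f i else 0 := by
        rw [sum_comm]; simp only [sum_ite_mem, univ_inter]

lemma sum_union_levels_le {ι : Type*} [Fintype ι] {δ : ℝ} (hδ0 : 0 < δ) (hδ1 : δ < 1)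
    {C : ℝ} (hC : 0 ≤ C) (p : ι → Prop) (d : ι → ℝ) (hd : ∀ i, 0 ≤ d i) (o : ℕ)
    (R : ℕ → Finset ι) (hR : ∀ k, ∀ i ∈ R k, p i → δ ^ (-(2 * (k : ℤ) + o)) ≤ C)
    (hcap : ∀ k, (∑ i ∈ R k, if p i then d i else 0) ≤
      min C (2 * δ ^ (-(2 * (k : ℤ) + o + 1)))) :
    ∑ i, (if (∃ k, i ∈ R k) ∧ p i then d i else 0) ≤ (1 + 2 * δ / (1 - δ ^ 2)) * C := by
  obtain ⟨N, hN⟩ := exists_lt_of_zpow_neg_le hδ0 hδ1 C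
  have hlevels : ∀ k, ∀ i ∈ R k, p i → k < N := fun k i hi hp => by
    have := hN _ (hR k i hi hp)
    omega
  refine (sum_ite_exists_mem_le R p d hd hlevels).trans ?_
  refine sum_range_le_of_top_level hδ0 hδ1 hC o hcap (fun k hk => ?_) N
  obtain ⟨i, hi, hne⟩ := exists_ne_zero_of_sum_ne_zero hk
  exact hR k i hi (of_not_not fun hp => hne (if_neg hp))

end PathUFP

open PathUFP in
theorem combine_levels_resource_augmentation_general {ι : Type*} [Fintype ι] {m : ℕ}
    (c : Fin m → ℝ) (hc : ∀ k, 0 < c k)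
    (s t : ι → ℕ) (d : ι → ℝ)
    (hd : ∀ i, 0 < d i)
    (δ : ℝ) (hδ0 : 0 < δ) (hδ1 : δ < 1) :
    (∀ R : ℕ → Finset ι,
      (∀ k : ℕ, ∀ i ∈ R k, LevelMem s t c δ (2 * k) i) →
      (∀ (k : ℕ) (e : Fin m),
        (∑ i ∈ R k, if uses s t i e then d i else 0)
          ≤ min (c e) (2 * δ ^ (-(2 * (k : ℤ) + 1)))) →
      ∀ e : Fin m,
        (∑ i : ι, if (∃ k : ℕ, i ∈ R k) ∧ uses s t i e then d i else 0)
          ≤ (1 + 2 * δ / (1 - δ ^ 2)) * c e) ∧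
    (∀ R : ℕ → Finset ι,
      (∀ k : ℕ, ∀ i ∈ R k, LevelMem s t c δ (2 * k + 1) i) →
      (∀ (k : ℕ) (e : Fin m),
        (∑ i ∈ R k, if uses s t i e then d i else 0)
          ≤ min (c e) (2 * δ ^ (-(2 * (k : ℤ) + 2)))) →
      ∀ e : Fin m,
        (∑ i : ι, if (∃ k : ℕ, i ∈ R k) ∧ uses s t i e then d i else 0)
          ≤ (1 + 2 * δ / (1 - δ ^ 2)) * c e) := by
  have hd' : ∀ i, 0 ≤ d i := fun i => (hd i).le
  constructor
  · intro R hR hcap e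
    exact sum_union_levels_le hδ0 hδ1 (hc e).le (fun i => uses s t i e) d hd' 0 R
      (fun k i hi hu => by simpa using (hR k i hi).1 e hu) (fun k => by simpa using hcap k e)
  · intro R hR hcap e
    exact sum_union_levels_le hδ0 hδ1 (hc e).le (fun i => uses s t i e) d hd' 1 R
      (fun k i hi hu => by simpa using (hR k i hi).1 e hu)
      (fun k => by convert hcap k e using 4; push_cast; ring)

open PathUFP in
/-- Let `0 < δ < 1` and for `i ≥ 0` let
`J^(i) = {j ∈ J : δ^{−i} ≤ b_j < δ^{−(i+1)}}`. Suppose for each `k ≥ 0` a set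
`R_k ⊆ J^(2k)` is given such that on every edge the total demand of the jobs of `R_k`
using it is at most `min(c_e, 2δ^{−(2k+1)})`. Then the union `R = ∪_k R_k` is a feasible
round under the augmented capacities `((1+γ) c_e)` where `γ = 2δ/(1−δ²)`. The analogous
statement holds for sets `R_k ⊆ J^(2k+1)` with per-edge bounds `min(c_e, 2δ^{−(2k+2)})`. -/
theorem combine_levels_resource_augmentation {ι : Type*} [Fintype ι] {m : ℕ}
    (c : Fin m → ℝ) (hc : ∀ k, 0 < c k)
    (s t : ι → ℕ) (d : ι → ℝ)
    (hst : ∀ i, s i < t i) (htm : ∀ i, t i ≤ m) (hd : ∀ i, 0 < d i)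
    (δ : ℝ) (hδ0 : 0 < δ) (hδ1 : δ < 1) :
    (∀ R : ℕ → Finset ι,
      (∀ k : ℕ, ∀ i ∈ R k, LevelMem s t c δ (2 * k) i) →
      (∀ (k : ℕ) (e : Fin m),
        (∑ i ∈ R k, if uses s t i e then d i else 0)
          ≤ min (c e) (2 * δ ^ (-(2 * (k : ℤ) + 1)))) →
      ∀ e : Fin m,
        (∑ i : ι, if (∃ k : ℕ, i ∈ R k) ∧ uses s t i e then d i else 0)
          ≤ (1 + 2 * δ / (1 - δ ^ 2)) * c e) ∧
    (∀ R : ℕ → Finset ι,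
      (∀ k : ℕ, ∀ i ∈ R k, LevelMem s t c δ (2 * k + 1) i) →
      (∀ (k : ℕ) (e : Fin m),
        (∑ i ∈ R k, if uses s t i e then d i else 0)
          ≤ min (c e) (2 * δ ^ (-(2 * (k : ℤ) + 2)))) →
      ∀ e : Fin m,
        (∑ i : ι, if (∃ k : ℕ, i ∈ R k) ∧ uses s t i e then d i else 0)
          ≤ (1 + 2 * δ / (1 - δ ^ 2)) * c e) :=
  combine_levels_resource_augmentation_general c hc s t d hd δ hδ0 hδ1
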